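/- (Lemma 4.1.) Let c ∈ (0,√2), set λ = √(2−c²)/2 and ω = √(2+c²)/2, and let θ_m < 0 and t* with ωt* ∈ (π, 2π) satisfy e^{2λt*} = θ_m² + 2λθ_m + 1 and cos(ωt*)/sin(ωt*) = (λθ_m + 1)/(ωθ_m). Then for every p ∈ (0,1) and every θ with θ_m < θ < θ₂ and θ ≠ θ₁, one has L(c,p,θ) ≤ 1 − (c/π)·(√(2−c²) + θ_m). -/

import Mathlib

/-!
Write `a = κ₁²` and `b = κ₂²`, so that `a + b = c²`, `ab = ξ` and `θ₂ (1 - a) = -√(2 - c²)`.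
The first arctangent in `L` is below `π/2`. The argument of the second one is a Möbius function
of `θ` with its pole at `θ₂`, tending to `+∞` as `θ ↑ θ₂`, and its arctangent has derivative
`κ₁ / (1 + a θ²) ≤ κ₁`; hence it is at least `π/2 + κ₁ (θ - θ₂)` for `θ < θ₂`. This gives
`L ≤ 1 - (κ₂/π)(θ - θ₂)`, and the claim follows from `κ₂ ≤ c`, `θ_m < θ` and `θ₂ < -√(2 - c²)`.
-/

open Real Filter Set

/-- `ξ = p c⁴ / 4`. -/
noncomputable def xiPar (c p : ℝ) : ℝ := p * c ^ 4 / 4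

/-- `κ₁ = √((c² − √(c⁴ − 4ξ))/2)`. -/
noncomputable def kappa1 (c p : ℝ) : ℝ :=
  Real.sqrt ((c ^ 2 - Real.sqrt (c ^ 4 - 4 * xiPar c p)) / 2)

/-- `κ₂ = √((c² + √(c⁴ − 4ξ))/2)`. -/
noncomputable def kappa2 (c p : ℝ) : ℝ :=
  Real.sqrt ((c ^ 2 + Real.sqrt (c ^ 4 - 4 * xiPar c p)) / 2)

/-- The function `L(c,p,θ)` from the paper. -/
noncomputable def Lfun (c p θ : ℝ) : ℝ :=
  (1 / 2) * (1 + kappa2 c p / kappa1 c p)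
  + (1 / Real.pi) * Real.arctan
      ((kappa2 c p * (-(kappa1 c p) ^ 2 + xiPar c p + xiPar c p * θ * Real.sqrt (2 - c ^ 2))) /
       (xiPar c p * (θ * (kappa1 c p) ^ 2 + Real.sqrt (2 - c ^ 2) + θ * (1 - c ^ 2))))
  - (kappa2 c p / (kappa1 c p * Real.pi)) * Real.arctan
      ((kappa1 c p * (-(kappa2 c p) ^ 2 + xiPar c p + xiPar c p * θ * Real.sqrt (2 - c ^ 2))) /
       (xiPar c p * (θ * (kappa2 c p) ^ 2 + Real.sqrt (2 - c ^ 2) + θ * (1 - c ^ 2))))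

/-- The discontinuity point `θ₁ = −2√(2−c²)/(2−c² − c²√(1−p))`. -/
noncomputable def theta1 (c p : ℝ) : ℝ :=
  -2 * Real.sqrt (2 - c ^ 2) / (2 - c ^ 2 - c ^ 2 * Real.sqrt (1 - p))

/-- The discontinuity point `θ₂ = −2√(2−c²)/(2−c² + c²√(1−p))`. -/
noncomputable def theta2 (c p : ℝ) : ℝ :=
  -2 * Real.sqrt (2 - c ^ 2) / (2 - c ^ 2 + c ^ 2 * Real.sqrt (1 - p))

/-- The threshold `p₀ = 4(c²−1)/c⁴`. -/
noncomputable def p0 (c : ℝ) : ℝ := 4 * (c ^ 2 - 1) / c ^ 4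

open Topology

theorem add_mul_sub_le_of_hasDerivAt_le_of_tendsto_nhdsLT {f f' : ℝ → ℝ} {K L T x : ℝ}
    (hf : ∀ y < T, HasDerivAt f (f' y) y) (hf' : ∀ y < T, f' y ≤ K)
    (hlim : Tendsto f (𝓝[<] T) (𝓝 L)) (hx : x < T) : L + K * (x - T) ≤ f x := by
  have hanti : AntitoneOn (fun y => f y - K * y) (Iio T) := by
    refine antitoneOn_of_hasDerivWithinAt_nonpos (convex_Iio T)
      (fun y hy => (hf y hy).continuousAt.continuousWithinAt.sub (by fun_prop)) (fun y hy => ?_)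
      (fun y hy => sub_nonpos.2 (hf' y (interior_Iio.subset hy)))
    rw [interior_Iio] at hy ⊢
    have h : HasDerivAt (fun y => f y - K * y) (f' y - K * 1) y :=
      (hf y hy).sub ((hasDerivAt_id y).const_mul K)
    simpa using h.hasDerivWithinAt
  have hlim' : Tendsto (fun y => f y - K * y) (𝓝[<] T) (𝓝 (L - K * T)) :=
    hlim.sub (((continuous_const.mul continuous_id).tendsto T).mono_left nhdsWithin_le_nhds)
  have : L - K * T ≤ f x - K * x := by
    refine le_of_tendsto hlim' ?_
    filter_upwards [Ioo_mem_nhdsLT hx] with y hy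
    exact hanti hx hy.2 hy.1.le
  linarith

theorem hasDerivAt_arctan_affine_div_affine (α β γ δ : ℝ) {y : ℝ} (hy : γ * y + δ ≠ 0) :
    HasDerivAt (fun y => arctan ((α * y + β) / (γ * y + δ)))
      ((α * δ - β * γ) / ((α * y + β) ^ 2 + (γ * y + δ) ^ 2)) y := by
  have hnum : HasDerivAt (fun y => α * y + β) α y := by
    simpa using ((hasDerivAt_id y).const_mul α).add_const β
  have hden : HasDerivAt (fun y => γ * y + δ) γ y := by
    simpa using ((hasDerivAt_id y).const_mul γ).add_const δ
  have h : HasDerivAt (fun y => arctan ((α * y + β) / (γ * y + δ)))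
      (1 / (1 + ((α * y + β) / (γ * y + δ)) ^ 2) *
        ((α * (γ * y + δ) - (α * y + β) * γ) / (γ * y + δ) ^ 2)) y :=
    (hnum.div hden hy).arctan
  refine h.congr_deriv ?_
  rw [div_pow, one_add_div (pow_ne_zero 2 hy), one_div_div, mul_comm,
    div_mul_div_cancel₀ (pow_ne_zero 2 hy), add_comm]
  ring

theorem tendsto_affine_div_affine_nhdsLT_atTop {α β γ δ T : ℝ} (hγ : 0 < γ)
    (hT : γ * T + δ = 0) (hneg : α * T + β < 0) :
    Tendsto (fun y => (α * y + β) / (γ * y + δ)) (𝓝[<] T) atTop := by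
  have hsub : Tendsto (fun y => y - T) (𝓝[<] T) (𝓝[<] 0) := by
    refine tendsto_nhdsWithin_of_tendsto_nhds_of_eventually_within _ ?_ ?_
    · have h : Tendsto (fun y => y - T) (𝓝[<] T) (𝓝 (T - T)) :=
        ((continuous_sub_right T).tendsto T).mono_left nhdsWithin_le_nhds
      rwa [sub_self] at h
    · filter_upwards [self_mem_nhdsWithin] with y hy using sub_neg.2 (mem_Iio.1 hy)
  have hnum : Tendsto (fun y => (α * y + β) / γ) (𝓝[<] T) (𝓝 ((α * T + β) / γ)) :=
    ((by fun_prop : Continuous fun y => (α * y + β) / γ).tendsto T).mono_left nhdsWithin_le_nhds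
  refine (Tendsto.neg_mul_atBot (div_neg_of_neg_of_pos hneg hγ) hnum
    (tendsto_inv_nhdsLT_zero.comp hsub)).congr fun y => ?_
  rw [Function.comp_apply, show γ * y + δ = γ * (y - T) by linarith, div_mul_eq_div_div,
    div_eq_mul_inv _ (y - T)]

theorem pi_div_two_add_mul_sub_le_arctan {c k₁ k₂ ξ s T x : ℝ} (hk₁ : 0 < k₁) (hk₂ : 0 < k₂)
    (hk₁_lt : k₁ ^ 2 < 1) (hc : c ^ 2 = k₁ ^ 2 + k₂ ^ 2) (hξ : ξ = k₁ ^ 2 * k₂ ^ 2)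
    (hs_sq : s ^ 2 = 2 - c ^ 2) (hT : T * (1 - k₁ ^ 2) = -s) (hx : x < T) :
    π / 2 + k₁ * (x - T) ≤
      arctan (k₁ * (-k₂ ^ 2 + ξ + ξ * x * s) / (ξ * (x * k₂ ^ 2 + s + x * (1 - c ^ 2)))) := by
  rw [hc] at hs_sq ⊢
  have hξ_pos : 0 < ξ := hξ ▸ by positivity
  have hξ_lt : ξ < 1 := by nlinarith
  have hform : ∀ y, k₁ * (-k₂ ^ 2 + ξ + ξ * y * s) / (ξ * (y * k₂ ^ 2 + s + y * (1 - (k₁ ^ 2 + k₂ ^ 2))))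
      = (k₁ * ξ * s * y + k₁ * (ξ - k₂ ^ 2)) / (ξ * (1 - k₁ ^ 2) * y + ξ * s) := fun y => by ring
  simp only [hform]
  have hnum : k₁ * ξ * s * (ξ * s) - k₁ * (ξ - k₂ ^ 2) * (ξ * (1 - k₁ ^ 2))
      = k₁ * ξ * k₂ ^ 2 * (1 - ξ) := by
    rw [hξ]; linear_combination (k₁ * (k₁ ^ 2 * k₂ ^ 2) ^ 2) * hs_sq
  have hden : ∀ y, (k₁ * ξ * s * y + k₁ * (ξ - k₂ ^ 2)) ^ 2 + (ξ * (1 - k₁ ^ 2) * y + ξ * s) ^ 2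
      = ξ * (1 - ξ) * (k₂ ^ 2 + ξ * y ^ 2) := fun y => by
    rw [hξ]; linear_combination ((k₁ ^ 2 * k₂ ^ 2) ^ 2 * (1 + k₁ ^ 2 * y ^ 2)) * hs_sq
  have hdenT : ξ * (1 - k₁ ^ 2) * T + ξ * s = 0 := by linear_combination ξ * hT
  have hnumT : (k₁ * ξ * s * T + k₁ * (ξ - k₂ ^ 2)) * (1 - k₁ ^ 2) = -(k₁ * k₂ ^ 2 * (1 - ξ)) := by
    rw [hξ]; linear_combination (k₁ * k₁ ^ 2 * k₂ ^ 2 * s) * hT - (k₁ * k₁ ^ 2 * k₂ ^ 2) * hs_sq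
  have hγ : 0 < ξ * (1 - k₁ ^ 2) := by nlinarith
  refine add_mul_sub_le_of_hasDerivAt_le_of_tendsto_nhdsLT
    (fun y hy => hasDerivAt_arctan_affine_div_affine _ _ _ _ ?_) (fun y _ => ?_) ?_ hx
  · rw [show ξ * (1 - k₁ ^ 2) * y + ξ * s = ξ * (1 - k₁ ^ 2) * (y - T) by linear_combination hdenT]
    exact (mul_neg_of_pos_of_neg hγ (sub_neg.2 hy)).ne
  · rw [hnum, hden, div_le_iff₀ (by positivity)]
    nlinarith [mul_nonneg (mul_nonneg hk₁.le (mul_nonneg hξ_pos.le (sub_pos.2 hξ_lt).le))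
      (mul_nonneg hξ_pos.le (sq_nonneg y))]
  · refine (tendsto_arctan_atTop.comp (tendsto_affine_div_affine_nhdsLT_atTop
      hγ hdenT ?_)).mono_right nhdsWithin_le_nhds
    nlinarith [mul_pos (mul_pos hk₁ (pow_pos hk₂ 2)) (sub_pos.2 hξ_lt)]

section Kappa

variable {c p : ℝ}

theorem sqrt_sq_sq_sub_four_xiPar (hp : p ≤ 1) :
    √(c ^ 4 - 4 * xiPar c p) = c ^ 2 * √(1 - p) := by
  rw [xiPar, show c ^ 4 - 4 * (p * c ^ 4 / 4) = (c ^ 2) ^ 2 * (1 - p) by ring,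
    Real.sqrt_mul' _ (by linarith), Real.sqrt_sq (sq_nonneg c)]

theorem kappa1_sq (hp0 : 0 ≤ p) (hp1 : p ≤ 1) :
    kappa1 c p ^ 2 = c ^ 2 * (1 - √(1 - p)) / 2 := by
  have hu : √(1 - p) ≤ 1 := Real.sqrt_le_one.2 (by linarith)
  rw [kappa1, sqrt_sq_sq_sub_four_xiPar hp1, Real.sq_sqrt (by nlinarith [sq_nonneg c])]
  ring

theorem kappa2_sq (hp : p ≤ 1) : kappa2 c p ^ 2 = c ^ 2 * (1 + √(1 - p)) / 2 := by
  rw [kappa2, sqrt_sq_sq_sub_four_xiPar hp,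
    Real.sq_sqrt (by nlinarith [sq_nonneg c, Real.sqrt_nonneg (1 - p)])]
  ring

theorem kappa1_pos (hc : c ≠ 0) (hp0 : 0 < p) (hp1 : p ≤ 1) : 0 < kappa1 c p := by
  have hu : √(1 - p) < 1 := (Real.sqrt_lt' one_pos).2 (by linarith)
  have hc2 : 0 < c ^ 2 := by positivity
  rw [kappa1, Real.sqrt_pos, sqrt_sq_sq_sub_four_xiPar hp1]
  nlinarith

theorem kappa2_pos (hc : c ≠ 0) (hp : p ≤ 1) : 0 < kappa2 c p := by
  have hc2 : 0 < c ^ 2 := by positivity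
  rw [kappa2, Real.sqrt_pos, sqrt_sq_sq_sub_four_xiPar hp]
  nlinarith [Real.sqrt_nonneg (1 - p)]

theorem kappa2_le (hc : 0 ≤ c) (hp0 : 0 ≤ p) (hp1 : p ≤ 1) : kappa2 c p ≤ c := by
  have hu : √(1 - p) ≤ 1 := Real.sqrt_le_one.2 (by linarith)
  rw [kappa2, Real.sqrt_le_left hc, sqrt_sq_sq_sub_four_xiPar hp1]
  nlinarith [sq_nonneg c]

theorem kappa1_sq_add_kappa2_sq (hp0 : 0 ≤ p) (hp1 : p ≤ 1) :
    kappa1 c p ^ 2 + kappa2 c p ^ 2 = c ^ 2 := by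
  rw [kappa1_sq hp0 hp1, kappa2_sq hp1]
  ring

theorem kappa1_sq_mul_kappa2_sq (hp0 : 0 ≤ p) (hp1 : p ≤ 1) :
    kappa1 c p ^ 2 * kappa2 c p ^ 2 = xiPar c p := by
  rw [kappa1_sq hp0 hp1, kappa2_sq hp1, xiPar]
  linear_combination (-(c ^ 4 / 4)) * Real.sq_sqrt (show 0 ≤ 1 - p by linarith)

theorem kappa1_sq_lt_one (hc : c ^ 2 < 2) (hp0 : 0 ≤ p) (hp1 : p ≤ 1) : kappa1 c p ^ 2 < 1 := by
  rw [kappa1_sq hp0 hp1]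
  nlinarith [sq_nonneg c, Real.sqrt_nonneg (1 - p)]

theorem theta2_mul_one_sub_kappa1_sq (hc : c ^ 2 < 2) (hp0 : 0 ≤ p) (hp1 : p ≤ 1) :
    theta2 c p * (1 - kappa1 c p ^ 2) = -√(2 - c ^ 2) := by
  have hden : 0 < 2 - c ^ 2 + c ^ 2 * √(1 - p) := by
    nlinarith [sq_nonneg c, Real.sqrt_nonneg (1 - p)]
  rw [kappa1_sq hp0 hp1, theta2]
  field_simp
  ring

theorem theta2_lt_neg_sqrt (hc : c ≠ 0) (hc2 : c ^ 2 < 2) (hp0 : 0 < p) (hp1 : p ≤ 1) :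
    theta2 c p < -√(2 - c ^ 2) := by
  have hT := theta2_mul_one_sub_kappa1_sq hc2 hp0.le hp1
  have hk₁ := pow_pos (kappa1_pos hc hp0 hp1) 2
  have hk₁_lt := kappa1_sq_lt_one hc2 hp0.le hp1
  have hs : 0 < √(2 - c ^ 2) := Real.sqrt_pos.2 (by linarith)
  nlinarith

end Kappa

theorem Lfun_le_one_sub {c p θ : ℝ} (hc : c ≠ 0) (hc2 : c ^ 2 < 2) (hp0 : 0 < p) (hp1 : p ≤ 1)
    (hθ : θ < theta2 c p) :
    Lfun c p θ ≤ 1 - kappa2 c p / π * (θ - theta2 c p) := by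
  have hk₁ := kappa1_pos hc hp0 hp1
  have hk₂ := kappa2_pos hc hp1
  have hA := (arctan_lt_pi_div_two
    (kappa2 c p * (-kappa1 c p ^ 2 + xiPar c p + xiPar c p * θ * √(2 - c ^ 2)) /
      (xiPar c p * (θ * kappa1 c p ^ 2 + √(2 - c ^ 2) + θ * (1 - c ^ 2))))).le
  have hB := pi_div_two_add_mul_sub_le_arctan hk₁ hk₂ (kappa1_sq_lt_one hc2 hp0.le hp1)
    (kappa1_sq_add_kappa2_sq hp0.le hp1).symm (kappa1_sq_mul_kappa2_sq hp0.le hp1).symm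
    (Real.sq_sqrt (by linarith)) (theta2_mul_one_sub_kappa1_sq hc2 hp0.le hp1) hθ
  have hcoef : 0 ≤ kappa2 c p / (kappa1 c p * π) := by positivity
  have hid : 1 / 2 * (1 + kappa2 c p / kappa1 c p) + 1 / π * (π / 2)
      - kappa2 c p / (kappa1 c p * π) * (π / 2 + kappa1 c p * (θ - theta2 c p))
      = 1 - kappa2 c p / π * (θ - theta2 c p) := by
    field_simp
    ring
  rw [Lfun, ← hid]
  gcongr

theorem stmt18_general (c : ℝ) (hc : c ∈ Set.Ioo 0 (Real.sqrt 2)) (θm : ℝ) :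
    ∀ p ∈ Set.Ioo (0 : ℝ) 1, ∀ θ : ℝ, θm < θ → θ < theta2 c p → θ ≠ theta1 c p →
      Lfun c p θ ≤ 1 - (c / Real.pi) * (Real.sqrt (2 - c ^ 2) + θm) := by
  rintro p ⟨hp0, hp1⟩ θ hθm hθ -
  obtain ⟨hc0, hc_lt⟩ := hc
  have hc2 : c ^ 2 < 2 := by
    simpa using (Real.lt_sqrt hc0.le).1 hc_lt
  have hk₂ := kappa2_le hc0.le hp0.le hp1.le
  have hT := theta2_lt_neg_sqrt hc0.ne' hc2 hp0 hp1.le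
  have key : c * (√(2 - c ^ 2) + θm) ≤ kappa2 c p * (θ - theta2 c p) := by
    calc c * (√(2 - c ^ 2) + θm) ≤ c * (θ - theta2 c p) := by gcongr; linarith
      _ ≤ kappa2 c p * (θ - theta2 c p) := mul_le_mul_of_nonpos_right hk₂ (by linarith)
  calc Lfun c p θ ≤ 1 - kappa2 c p / π * (θ - theta2 c p) := Lfun_le_one_sub hc0.ne' hc2 hp0 hp1.le hθ
    _ ≤ 1 - c / π * (√(2 - c ^ 2) + θm) := by
      rw [div_mul_eq_mul_div, div_mul_eq_mul_div]
      gcongr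

/-- Lemma 4.1: Let `c ∈ (0,√2)`, `λ = √(2−c²)/2`, `ω = √(2+c²)/2`, and
let `θ_m < 0` and `t*` with `ωt* ∈ (π,2π)` satisfy `e^{2λt*} = θ_m² + 2λθ_m + 1` and
`cos(ωt*)/sin(ωt*) = (λθ_m + 1)/(ωθ_m)`. Then for every `p ∈ (0,1)` and every
`θ ∈ (θ_m, θ₂)` with `θ ≠ θ₁`, one has `L(c,p,θ) ≤ 1 − (c/π)(√(2−c²) + θ_m)`. -/
theorem stmt18 (c : ℝ) (hc : c ∈ Set.Ioo 0 (Real.sqrt 2))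
    (lam ω : ℝ) (hlam : lam = Real.sqrt (2 - c ^ 2) / 2)
    (hω : ω = Real.sqrt (2 + c ^ 2) / 2)
    (θm tstar : ℝ) (hθm : θm < 0)
    (ht : ω * tstar ∈ Set.Ioo Real.pi (2 * Real.pi))
    (heq1 : Real.exp (2 * lam * tstar) = θm ^ 2 + 2 * lam * θm + 1)
    (heq2 : Real.cos (ω * tstar) / Real.sin (ω * tstar) = (lam * θm + 1) / (ω * θm)) :
    ∀ p ∈ Set.Ioo (0 : ℝ) 1, ∀ θ : ℝ, θm < θ → θ < theta2 c p → θ ≠ theta1 c p →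
      Lfun c p θ ≤ 1 - (c / Real.pi) * (Real.sqrt (2 - c ^ 2) + θm) :=
  stmt18_general c hc θm
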